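/- arXiv:1707.04371 — 6 statements merged into one kernel-verified Lean document; each statement's English description precedes it below -/
import Mathlib

section
/- Let (Ω, F, P) be a probability space, let 𝕐 be a measurable space, and let Y₁, Y₂ : Ω → 𝕐 be measurable. Let D : Ω → {1,2} be measurable, independent of the pair (Y₁, Y₂), with 0 < P(D = 1) < 1, and define Y_D : Ω → 𝕐 by Y_D(ω) = Y₁(ω) if D(ω)=1 and Y_D(ω) = Y₂(ω) if D(ω)=2. Assume that for every measurable set C ⊆ 𝕐 with 0 < P(Y₁ ∈ C) < 1 one has P(Y₁ ∈ C | Y₂ ∈ C) < 1 (i.e. P(Y₁ ∈ C and Y₂ ∈ C) < P(Y₂ ∈ C) whenever P(Y₂ ∈ C) > 0). If f : 𝕐 × 𝕐 → ℝ is measurable, f(Y₁,Y₂) is integrable, and f(Y₁,Y₂) is P-almost surely equal to its conditional expectation E[f(Y₁,Y₂) | σ(Y_D)] given the σ-algebra generated by Y_D, then f(Y₁,Y₂) is P-almost surely constant. -/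
/-!
Since `f (Y₁, Y₂)` is a.s. `σ(Y_D)`-measurable, each of its events `{f (Y₁, Y₂) ∈ B}` is a.s.
an event `{Y_D ∈ C}`. On `{D = 0}` this event is `{Y₁ ∈ C}` and on `{D = 1}` it is `{Y₂ ∈ C}`;
as `D` is independent of `(Y₁, Y₂)` and takes both values with positive probability, both
identities hold a.s. on all of `Ω`. Hence `{Y₁ ∈ C} = {Y₂ ∈ C}` a.s., which the hypothesis on
`(Y₁, Y₂)` allows only for events of probability `0` or `1`. A real random variable all of whose
events are trivial is a.s. constant.
-/

open MeasureTheory ProbabilityTheory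
open scoped symmDiff

section

variable {Ω ι β 𝕐 : Type*} [MeasurableSpace Ω] [MeasurableSpace ι] [MeasurableSpace β]
  [MeasurableSpace 𝕐] {P : Measure Ω}

theorem ProbabilityTheory.IndepFun.ae_mem_iff_of_ae_imp {D : Ω → ι} {X : Ω → β}
    (h : IndepFun D X P) {s : Set ι} (hs : MeasurableSet s) (hDs : P (D ⁻¹' s) ≠ 0)
    {A A' : Set β} (hA : MeasurableSet A) (hA' : MeasurableSet A')
    (hAA' : ∀ᵐ ω ∂P, D ω ∈ s → (X ω ∈ A ↔ X ω ∈ A')) :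
    ∀ᵐ ω ∂P, X ω ∈ A ↔ X ω ∈ A' := by
  have hnull : P (D ⁻¹' s ∩ X ⁻¹' (A ∆ A')) = 0 := by
    refine measure_mono_null (fun ω ⟨hωs, hωA⟩ => ?_) (ae_iff.1 hAA')
    rw [Set.mem_preimage, Set.mem_symmDiff] at hωA
    simp only [Set.mem_ofPred_eq]
    tauto
  rw [h.measure_inter_preimage_eq_mul _ _ hs (hA.symmDiff hA'), mul_eq_zero,
    or_iff_right hDs, Set.preimage_symmDiff, measure_symmDiff_eq_zero_iff] at hnull
  exact Filter.eventuallyEq_set.1 hnull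

theorem ProbabilityTheory.IndepFun.ae_mem_iff_of_ae_mem_iff_ite [DecidableEq ι]
    [MeasurableSingletonClass ι] {D : Ω → ι} {Y₁ Y₂ : Ω → 𝕐}
    (h : IndepFun D (fun ω => (Y₁ ω, Y₂ ω)) P) {i : ι} (hi : P (D ⁻¹' {i}) ≠ 0)
    (hi' : P (D ⁻¹' {i}ᶜ) ≠ 0) {A : Set (𝕐 × 𝕐)} (hA : MeasurableSet A) {C : Set 𝕐}
    (hC : MeasurableSet C)
    (hAC : ∀ᵐ ω ∂P, (Y₁ ω, Y₂ ω) ∈ A ↔ (if D ω = i then Y₁ ω else Y₂ ω) ∈ C) :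
    (∀ᵐ ω ∂P, (Y₁ ω, Y₂ ω) ∈ A ↔ Y₁ ω ∈ C) ∧ (∀ᵐ ω ∂P, (Y₁ ω, Y₂ ω) ∈ A ↔ Y₂ ω ∈ C) := by
  constructor
  · refine h.ae_mem_iff_of_ae_imp (A' := Prod.fst ⁻¹' C) (measurableSet_singleton i) hi hA
      (measurable_fst hC) (hAC.mono fun ω hω hDω => ?_)
    rwa [if_pos (Set.mem_singleton_iff.1 hDω)] at hω
  · refine h.ae_mem_iff_of_ae_imp (A' := Prod.snd ⁻¹' C) (measurableSet_singleton i).compl hi'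
      hA (measurable_snd hC) (hAC.mono fun ω hω hDω => ?_)
    rwa [if_neg (Set.mem_singleton_iff.not.1 hDω)] at hω

theorem ae_mem_or_ae_notMem_of_ae_mem_iff [IsProbabilityMeasure P] {Y₁ Y₂ : Ω → 𝕐}
    (hY₁ : Measurable Y₁) {C : Set 𝕐} (hC : MeasurableSet C)
    (hsep : 0 < P (Y₁ ⁻¹' C) → P (Y₁ ⁻¹' C) < 1 → 0 < P (Y₂ ⁻¹' C) →
      P (Y₁ ⁻¹' C ∩ Y₂ ⁻¹' C) < P (Y₂ ⁻¹' C))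
    (h : ∀ᵐ ω ∂P, Y₁ ω ∈ C ↔ Y₂ ω ∈ C) :
    (∀ᵐ ω ∂P, Y₁ ω ∈ C) ∨ ∀ᵐ ω ∂P, Y₁ ω ∉ C := by
  by_contra hne
  obtain ⟨hnot_ae_mem, hnot_ae_notMem⟩ := not_or.1 hne
  have hpos : 0 < P (Y₁ ⁻¹' C) :=
    pos_iff_ne_zero.2 fun h0 => hnot_ae_notMem (measure_eq_zero_iff_ae_notMem.1 h0)
  have hlt : P (Y₁ ⁻¹' C) < 1 :=
    prob_le_one.lt_of_ne fun h1 =>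
      hnot_ae_mem (mem_ae_iff.2 ((prob_compl_eq_zero_iff (hY₁ hC)).2 h1))
  have h₁₂ : Y₁ ⁻¹' C =ᵐ[P] Y₂ ⁻¹' C := Filter.eventuallyEq_set.2 h
  have hinter : (Y₁ ⁻¹' C ∩ Y₂ ⁻¹' C : Set Ω) =ᵐ[P] Y₂ ⁻¹' C := by
    simpa using ae_eq_set_inter h₁₂ (ae_eq_refl (Y₂ ⁻¹' C))
  exact (hsep hpos hlt (measure_congr h₁₂ ▸ hpos)).ne (measure_congr hinter)

end

theorem const_of_condexp_singleDeletion_general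
    {Ω 𝕐 : Type*} [F : MeasurableSpace Ω] [MeasurableSpace 𝕐]
    (P : Measure Ω) [IsProbabilityMeasure P]
    (Y₁ Y₂ : Ω → 𝕐) (hY₁ : Measurable Y₁)
    (D : Ω → Fin 2)
    (hindep : IndepFun D (fun ω => (Y₁ ω, Y₂ ω)) P)
    (hD0 : 0 < P {ω | D ω = 0}) (hD1 : P {ω | D ω = 0} < 1)
    (hcond : ∀ C : Set 𝕐, MeasurableSet C →
      0 < P (Y₁ ⁻¹' C) → P (Y₁ ⁻¹' C) < 1 → 0 < P (Y₂ ⁻¹' C) →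
      P (Y₁ ⁻¹' C ∩ Y₂ ⁻¹' C) < P (Y₂ ⁻¹' C))
    (f : 𝕐 × 𝕐 → ℝ) (hf : Measurable f)
    (hfix : (fun ω => f (Y₁ ω, Y₂ ω)) =ᵐ[P]
      P[(fun ω => f (Y₁ ω, Y₂ ω)) |
        MeasurableSpace.comap (fun ω => if D ω = 0 then Y₁ ω else Y₂ ω) inferInstance]) :
    ∃ c : ℝ, (fun ω => f (Y₁ ω, Y₂ ω)) =ᵐ[P] fun _ => c := by
  have hD1' : P (D ⁻¹' {0}ᶜ) ≠ 0 := fun h0 => by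
    have h := measure_univ_le_add_compl (μ := P) (D ⁻¹' {0})
    rw [← Set.preimage_compl, h0, add_zero, measure_univ] at h
    exact hD1.not_ge h
  refine Filter.exists_eventuallyEq_const_of_forall_separating MeasurableSet fun B hB => ?_
  obtain ⟨C, hC, hCB⟩ := (stronglyMeasurable_condExp (μ := P)
    (m := MeasurableSpace.comap (fun ω => if D ω = 0 then Y₁ ω else Y₂ ω) inferInstance)
    (f := fun ω => f (Y₁ ω, Y₂ ω))).measurable hB
  have hsel : ∀ᵐ ω ∂P, (Y₁ ω, Y₂ ω) ∈ f ⁻¹' B ↔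
      (if D ω = 0 then Y₁ ω else Y₂ ω) ∈ C := hfix.mono fun ω hω => by
    rw [Set.mem_preimage, show f (Y₁ ω, Y₂ ω) = _ from hω]
    exact (Set.ext_iff.1 hCB ω).symm
  obtain ⟨hB₁, hB₂⟩ := hindep.ae_mem_iff_of_ae_mem_iff_ite hD0.ne' hD1' (hf hB) hC hsel
  have h₁₂ : ∀ᵐ ω ∂P, Y₁ ω ∈ C ↔ Y₂ ω ∈ C := by
    filter_upwards [hB₁, hB₂] with ω h₁ h₂ using h₁.symm.trans h₂
  rcases ae_mem_or_ae_notMem_of_ae_mem_iff hY₁ hC (hcond C hC) h₁₂ with h | h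
  · exact Or.inl (by filter_upwards [h, hB₁] with ω hω h₁ using h₁.2 hω)
  · exact Or.inr (by filter_upwards [h, hB₁] with ω hω h₁ using fun hZ => hω (h₁.1 hZ))

/-- Single-deletion lemma: if `D` is an independent random index with `0 < P(D = 1) < 1`,
`Y_D` is the randomly selected coordinate, and no event `C` with `0 < P(Y₁ ∈ C) < 1`
satisfies `P(Y₁ ∈ C | Y₂ ∈ C) = 1`, then any integrable `f (Y₁, Y₂)` which equals its
conditional expectation given `σ(Y_D)` is a.s. constant. -/
theorem const_of_condexp_singleDeletion
    {Ω 𝕐 : Type*} [F : MeasurableSpace Ω] [MeasurableSpace 𝕐]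
    (P : Measure Ω) [IsProbabilityMeasure P]
    (Y₁ Y₂ : Ω → 𝕐) (hY₁ : Measurable Y₁) (hY₂ : Measurable Y₂)
    (D : Ω → Fin 2) (hD : Measurable D)
    (hindep : IndepFun D (fun ω => (Y₁ ω, Y₂ ω)) P)
    (hD0 : 0 < P {ω | D ω = 0}) (hD1 : P {ω | D ω = 0} < 1)
    (hcond : ∀ C : Set 𝕐, MeasurableSet C →
      0 < P (Y₁ ⁻¹' C) → P (Y₁ ⁻¹' C) < 1 → 0 < P (Y₂ ⁻¹' C) →
      P (Y₁ ⁻¹' C ∩ Y₂ ⁻¹' C) < P (Y₂ ⁻¹' C))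
    (f : 𝕐 × 𝕐 → ℝ) (hf : Measurable f)
    (hint : Integrable (fun ω => f (Y₁ ω, Y₂ ω)) P)
    (hfix : (fun ω => f (Y₁ ω, Y₂ ω)) =ᵐ[P]
      P[(fun ω => f (Y₁ ω, Y₂ ω)) |
        MeasurableSpace.comap (fun ω => if D ω = 0 then Y₁ ω else Y₂ ω) inferInstance]) :
    ∃ c : ℝ, (fun ω => f (Y₁ ω, Y₂ ω)) =ᵐ[P] fun _ => c :=
  const_of_condexp_singleDeletion_general (F := F) P Y₁ Y₂ hY₁ D hindep hD0 hD1 hcond f hf hfix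
end

section
/- Let (Ω, F, P) be a probability space, let 𝕐 be a standard Borel space, let K ≥ 2, and let Y : Ω → 𝕐^K be measurable. Let ν₁, …, ν_K be probability measures on 𝕐 such that the law of Y and the product measure ν₁ ⊗ ⋯ ⊗ ν_K are mutually absolutely continuous. Let J : Ω → {1,…,K} be measurable, independent of Y, with 0 < P(J = i) < 1 for every i, and define the thinned observation Z : Ω → 𝕐^{K−1} as the vector Y with its J-th coordinate deleted (i.e. Z(ω)_i = Y(ω)_{σ_{J(ω)}(i)} where σ_j : {1,…,K−1} → {1,…,K} is the increasing enumeration of {1,…,K} \ {j}). If f : 𝕐^K → ℝ is measurable, f(Y) is integrable, and f(Y) is P-almost surely equal to its conditional expectation E[f(Y) | σ(Z)] given the σ-algebra generated by Z, then f(Y) is P-almost surely constant. -/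
/-!
On the event `J = j` the variable `Z` is `Y` with coordinate `j` deleted, so `f (Y) = h (Z)`
(Doob–Dynkin) says that `f` agrees with a function of the other coordinates there. Since `J` is
independent of `Y` and `P (J = j) > 0`, this holds `P`-a.s. on all of `Ω`, hence `ν`-a.e.
for the product `ν = ν₁ ⊗ ⋯ ⊗ ν_K`. Now take two independent `ν`-samples `y, y'` and switch
coordinates from `y` to `y'` one at a time: every intermediate vector is again `ν`-distributed
and consecutive ones differ in one coordinate only, so `f y = f y'` for `ν ⊗ ν`-a.e. `(y, y')`,
which forces `f` to be `ν`-a.e., and thus `P ∘ Y⁻¹`-a.e., constant.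
-/

open MeasureTheory ProbabilityTheory Set

lemma ProbabilityTheory.IndepFun.ae_mem_of_ae_mem_imp {Ω α β : Type*} [MeasurableSpace Ω]
    [MeasurableSpace α] [MeasurableSpace β] {P : Measure Ω} {J : Ω → α} {Y : Ω → β}
    (hindep : IndepFun J Y P) {s : Set α} (hs : MeasurableSet s) (hJs : P (J ⁻¹' s) ≠ 0)
    {t : Set β} (ht : MeasurableSet t) (h : ∀ᵐ ω ∂P, J ω ∈ s → Y ω ∈ t) :
    ∀ᵐ ω ∂P, Y ω ∈ t := by
  have hprod := hindep.measure_inter_preimage_eq_mul s tᶜ hs ht.compl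
  rw [ae_iff] at h ⊢
  have hinter : {ω | ¬(J ω ∈ s → Y ω ∈ t)} = J ⁻¹' s ∩ Y ⁻¹' tᶜ := by ext; simp
  rw [hinter] at h
  rw [h, eq_comm, mul_eq_zero] at hprod
  exact hprod.resolve_left hJs

lemma exists_ae_eq_const_of_ae_fst_eq_snd {α β : Type*} [MeasurableSpace α] {μ : Measure α}
    [SFinite μ] [NeZero μ] {f : α → β} (h : ∀ᵐ p ∂μ.prod μ, f p.1 = f p.2) :
    ∃ c, f =ᵐ[μ] fun _ => c := by
  have : (ae μ).NeBot := ae_neBot.2 (NeZero.ne μ)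
  obtain ⟨y₀, hy₀⟩ := (Measure.ae_ae_of_ae_prod h).exists
  exact ⟨f y₀, hy₀.mono fun _ hy => hy.symm⟩

section Piecewise

variable {ι : Type*} {X : ι → Type*} [∀ i, MeasurableSpace (X i)]

lemma measurable_finsetPiecewise_prod (s : Finset ι) [∀ i, Decidable (i ∈ s)] :
    Measurable fun p : (∀ i, X i) × (∀ i, X i) => s.piecewise p.2 p.1 := by
  refine measurable_pi_lambda _ fun i => ?_
  by_cases hi : i ∈ s <;> simp only [Finset.piecewise, hi, if_true, if_false] <;> fun_prop

lemma map_finsetPiecewise_prod_pi [Fintype ι] (μ : ∀ i, Measure (X i)) [∀ i, IsProbabilityMeasure (μ i)]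
    (s : Finset ι) [∀ i, Decidable (i ∈ s)] :
    ((Measure.pi μ).prod (Measure.pi μ)).map (fun p => s.piecewise p.2 p.1) = Measure.pi μ := by
  refine (Measure.pi_eq fun t ht => ?_).symm
  rw [Measure.map_apply (measurable_finsetPiecewise_prod s) (.univ_pi ht)]
  have hpre : (fun p : (∀ i, X i) × (∀ i, X i) => s.piecewise p.2 p.1) ⁻¹' univ.pi t =
      (univ.pi fun i => if i ∈ s then univ else t i) ×ˢ
        (univ.pi fun i => if i ∈ s then t i else univ) := by
    ext p
    simp only [mem_preimage, Set.mem_pi, mem_univ, true_implies, mem_prod, ← forall_and]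
    refine forall_congr' fun i => ?_
    by_cases hi : i ∈ s <;> simp [hi]
  rw [hpre, Measure.prod_prod, Measure.pi_pi, Measure.pi_pi, ← Finset.prod_mul_distrib]
  refine Finset.prod_congr rfl fun i _ => ?_
  by_cases hi : i ∈ s <;> simp [hi]

theorem exists_ae_eq_const_of_forall_ae_eq_indep_coord [Fintype ι] [DecidableEq ι] {β : Type*}
    (μ : ∀ i, Measure (X i)) [∀ i, IsProbabilityMeasure (μ i)] {f : (∀ i, X i) → β}
    (hf : ∀ j, ∃ g : (∀ i, X i) → β, (∀ y y', (∀ i ≠ j, y i = y' i) → g y = g y') ∧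
      f =ᵐ[Measure.pi μ] g) :
    ∃ c, f =ᵐ[Measure.pi μ] fun _ => c := by
  have hswitch : ∀ (s : Finset ι) j, ∀ᵐ p ∂(Measure.pi μ).prod (Measure.pi μ),
      f (s.piecewise p.2 p.1) = f ((insert j s).piecewise p.2 p.1) := by
    intro s j
    obtain ⟨g, hg, hfg⟩ := hf j
    have hfg_at : ∀ s' : Finset ι, ∀ᵐ p ∂(Measure.pi μ).prod (Measure.pi μ),
        f (s'.piecewise p.2 p.1) = g (s'.piecewise p.2 p.1) := fun s' =>
      ae_of_ae_map (measurable_finsetPiecewise_prod s').aemeasurable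
        (by rwa [map_finsetPiecewise_prod_pi μ s'])
    filter_upwards [hfg_at s, hfg_at (insert j s)] with p h₁ h₂
    rw [h₁, h₂]
    exact hg _ _ fun i hi => (Finset.piecewise_insert_of_ne _ _ _ hi).symm
  have hchain : ∀ s : Finset ι, ∀ᵐ p ∂(Measure.pi μ).prod (Measure.pi μ),
      f p.1 = f (s.piecewise p.2 p.1) := by
    intro s
    induction s using Finset.induction_on with
    | empty => exact .of_forall fun p => by rw [Finset.piecewise_empty]
    | insert j s _ ih =>
      filter_upwards [ih, hswitch s j] with p h₁ h₂
      rw [h₁, h₂]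
  refine exists_ae_eq_const_of_ae_fst_eq_snd ?_
  filter_upwards [hchain Finset.univ] with p hp
  rwa [Finset.piecewise_univ] at hp

end Piecewise

theorem const_of_condexp_multipleDeletion_general
    {Ω 𝕐 : Type*} [F : MeasurableSpace Ω] [MeasurableSpace 𝕐]
    (P : Measure Ω) [IsProbabilityMeasure P]
    (n : ℕ)
    (Y : Ω → Fin (n + 1) → 𝕐) (hY : Measurable Y)
    (ν : Fin (n + 1) → Measure 𝕐) (hν : ∀ i, IsProbabilityMeasure (ν i))
    (hac₁ : Measure.map Y P ≪ Measure.pi ν)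
    (hac₂ : Measure.pi ν ≪ Measure.map Y P)
    (J : Ω → Fin (n + 1))
    (hindep : IndepFun J Y P)
    (hJpos : ∀ i, 0 < P {ω | J ω = i})
    (f : (Fin (n + 1) → 𝕐) → ℝ) (hf : Measurable f)
    (hfix : (fun ω => f (Y ω)) =ᵐ[P]
      P[(fun ω => f (Y ω)) |
        MeasurableSpace.comap (fun ω (i : Fin n) => Y ω ((J ω).succAbove i)) inferInstance]) :
    ∃ c : ℝ, (fun ω => f (Y ω)) =ᵐ[P] fun _ => c := by
  set Z : Ω → Fin n → 𝕐 := fun ω i => Y ω ((J ω).succAbove i)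
  obtain ⟨h, hh, hcond⟩ := (stronglyMeasurable_condExp (μ := P) (f := fun ω => f (Y ω))
    (m := .comap Z inferInstance)).exists_eq_measurable_comp
  have hdel : ∀ j : Fin (n + 1), ∀ᵐ y ∂P.map Y, f y = h fun i => y (j.succAbove i) := by
    intro j
    have hmeas : MeasurableSet {y | f y = h fun i => y (j.succAbove i)} :=
      measurableSet_eq_fun hf (hh.measurable.comp (by fun_prop))
    rw [ae_map_iff hY.aemeasurable hmeas]
    refine hindep.ae_mem_of_ae_mem_imp (measurableSet_singleton j) (hJpos j).ne' hmeas ?_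
    filter_upwards [hfix] with ω hω hJω
    rw [mem_singleton_iff] at hJω
    simp only [hω, hcond, Function.comp_apply, Z, hJω]
  have := hν
  obtain ⟨c, hc⟩ := exists_ae_eq_const_of_forall_ae_eq_indep_coord ν fun j =>
    ⟨fun y => h fun i => y (j.succAbove i),
      fun y y' hyy' => congrArg h (funext fun i => hyy' _ (Fin.succAbove_ne j i)),
      hac₂.ae_le (hdel j)⟩
  exact ⟨c, ae_of_ae_map hY.aemeasurable (hac₁.ae_le hc)⟩

/-- Multiple-deletion lemma: let `Y : Ω → 𝕐^K` (`K = n + 1 ≥ 2`) have a law mutually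
absolutely continuous with a product of probability measures, and let `J` be an
independent random index with `0 < P(J = i) < 1` for all `i`.  Let `Z` be `Y` with its
`J`-th coordinate deleted.  Then any integrable `f (Y)` equal a.s. to its conditional
expectation given `σ(Z)` is a.s. constant. -/
theorem const_of_condexp_multipleDeletion
    {Ω 𝕐 : Type*} [F : MeasurableSpace Ω] [MeasurableSpace 𝕐] [StandardBorelSpace 𝕐]
    (P : Measure Ω) [IsProbabilityMeasure P]
    (n : ℕ) (hn : 1 ≤ n)
    (Y : Ω → Fin (n + 1) → 𝕐) (hY : Measurable Y)
    (ν : Fin (n + 1) → Measure 𝕐) (hν : ∀ i, IsProbabilityMeasure (ν i))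
    (hac₁ : Measure.map Y P ≪ Measure.pi ν)
    (hac₂ : Measure.pi ν ≪ Measure.map Y P)
    (J : Ω → Fin (n + 1)) (hJ : Measurable J)
    (hindep : IndepFun J Y P)
    (hJpos : ∀ i, 0 < P {ω | J ω = i}) (hJlt : ∀ i, P {ω | J ω = i} < 1)
    (f : (Fin (n + 1) → 𝕐) → ℝ) (hf : Measurable f)
    (hint : Integrable (fun ω => f (Y ω)) P)
    (hfix : (fun ω => f (Y ω)) =ᵐ[P]
      P[(fun ω => f (Y ω)) |
        MeasurableSpace.comap (fun ω (i : Fin n) => Y ω ((J ω).succAbove i)) inferInstance]) :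
    ∃ c : ℝ, (fun ω => f (Y ω)) =ᵐ[P] fun _ => c :=
  const_of_condexp_multipleDeletion_general (F := F) P n Y hY ν hν hac₁ hac₂ J hindep hJpos f hf
    hfix
end

section
/- Let (Ω, F, P) be a probability space, let 𝕐 be a standard Borel space, let n ≥ 1 and m ≥ 1 and k = n + m, and let Y : Ω → 𝕐^k be measurable with law mutually absolutely continuous with ν^k (the k-fold product of a probability measure ν on 𝕐). Let ς : Ω → Sym(k) be a random permutation of {1,…,k}, independent of Y, such that P(ς = id) > 0 and P(ς = (i j)) > 0 for every transposition (i j). Define Z : Ω → 𝕐^k by Z(ω)_i = Y(ω)_{ς(ω)(i)}. If f : 𝕐^n → ℝ is measurable, f(Y₁,…,Yₙ) is integrable, and f(Y₁,…,Yₙ) is P-almost surely equal to its conditional expectation E[f(Y₁,…,Yₙ) | σ(Z)] given the σ-algebra generated by Z, then f(Y₁,…,Yₙ) is P-almost surely constant. -/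
/-!
Write `F y = f (y₁, …, yₙ)` on `𝕐^(n+m)` and `Z = Y ∘ ς`. By Doob–Dynkin the hypothesis says
`F ∘ Y = h ∘ Z` a.s. for a measurable `h`. Since `ς` is independent of `Y` and charges the
permutation `π`, this gives `F y = h (y ∘ π)` for `P.map Y`-a.e., hence `ν^(n+m)`-a.e., `y`.
Comparing `π = id` with `π = (a b)` shows that `F` is a.e. invariant under swapping each
coordinate `a < n` with the coordinate `b = n`, on which `F` does not depend. So if `G =ᵐ F`
depends only on the coordinates in `s ∌ b`, then `G =ᵐ G ∘ (a b)` ignores `a ∈ s`, and integrating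
out the coordinate `a` of `G` gives a function `=ᵐ F` of the coordinates in `s \ {a}`. Starting
from `G = F`, `s = {0, …, n - 1}` and emptying `s` leaves a constant.
-/

open MeasureTheory ProbabilityTheory Function

theorem ProbabilityTheory.Indep.ae_map_of_ae {Ω α β : Type*} [MeasurableSpace Ω]
    [MeasurableSpace α] {P : Measure Ω} {Y : Ω → α} {ς : Ω → β}
    (hindep : Indep (MeasurableSpace.comap ς ⊤) (MeasurableSpace.comap Y inferInstance) P)
    (hY : Measurable Y) {p : β → α → Prop} {b : β} (hb : 0 < P {ω | ς ω = b})
    (hp : MeasurableSet {y | p b y}) (h : ∀ᵐ ω ∂P, p (ς ω) (Y ω)) :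
    ∀ᵐ y ∂P.map Y, p b y := by
  rw [ae_map_iff hY.aemeasurable hp, ae_iff]
  have hnull : P ({ω | ς ω = b} ∩ {ω | ¬p b (Y ω)}) = 0 :=
    measure_mono_null (fun ω ⟨hςω, hYω⟩ => by simp_all) (ae_iff.mp h)
  rw [(hindep.indepSet_of_measurableSet (s := {ω | ς ω = b}) (t := {ω | ¬p b (Y ω)})
    ⟨{b}, trivial, rfl⟩ ⟨_, hp.compl, rfl⟩).measure_inter_eq_mul] at hnull
  exact (mul_eq_zero.mp hnull).resolve_left hb.ne'

theorem dependsOn_integral_update {ι 𝕐 E : Type*} [DecidableEq ι] [MeasurableSpace 𝕐]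
    [NormedAddCommGroup E] [NormedSpace ℝ E] {ν : Measure 𝕐} {F : (ι → 𝕐) → E} {s : Set ι}
    (hF : DependsOn F s) (a : ι) :
    DependsOn (fun y => ∫ t, F (update y a t) ∂ν) (s \ {a}) := by
  intro x y hxy
  refine integral_congr_ae (.of_forall fun t => hF fun i hi => ?_)
  by_cases hia : i = a
  · simp [hia]
  · simp [update_of_ne hia, hxy i ⟨hi, hia⟩]

section ProductMeasure

variable {ι 𝕐 : Type*} [Fintype ι] [MeasurableSpace 𝕐] {ν : Measure 𝕐}

theorem measurePreserving_comp_perm [SigmaFinite ν] (τ : Equiv.Perm ι) :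
    MeasurePreserving (fun y : ι → 𝕐 => y ∘ τ) (Measure.pi fun _ => ν) (Measure.pi fun _ => ν) :=
  measurePreserving_arrowCongr' (fun _ => ν) (fun _ => ν) τ.symm (MeasurableEquiv.refl 𝕐)
    fun _ => MeasurePreserving.id ν

variable [DecidableEq ι] [IsProbabilityMeasure ν]

theorem measurePreserving_update (a : ι) :
    MeasurePreserving (fun p : (ι → 𝕐) × 𝕐 => update p.1 a p.2)
      ((Measure.pi fun _ => ν).prod ν) (Measure.pi fun _ => ν) := by
  refine ⟨measurable_update', (Measure.pi_eq fun s hs => ?_).symm⟩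
  have hpre : (fun p : (ι → 𝕐) × 𝕐 => update p.1 a p.2) ⁻¹' Set.univ.pi s
      = Set.univ.pi (update s a Set.univ) ×ˢ s a := by
    ext ⟨y, t⟩
    simp only [Set.mem_preimage, Set.mem_prod, Set.mem_univ_pi, update_apply]
    grind
  rw [Measure.map_apply measurable_update' (MeasurableSet.univ_pi hs), hpre, Measure.prod_prod,
    Measure.pi_pi, ← Finset.prod_erase_mul _ _ (Finset.mem_univ a),
    ← Finset.prod_erase_mul _ _ (Finset.mem_univ a), update_self, measure_univ, mul_one]
  exact congrArg (· * _) (Finset.prod_congr rfl fun i hi =>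
    by rw [update_of_ne (Finset.ne_of_mem_erase hi)])

variable {E : Type*} [NormedAddCommGroup E] [NormedSpace ℝ E] [CompleteSpace E]

theorem integral_update_ae_eq {F G : (ι → 𝕐) → E} (a : ι)
    (hFG : F =ᵐ[Measure.pi fun _ => ν] G) (hG : ∀ y t, G (update y a t) = G y) :
    (fun y => ∫ t, F (update y a t) ∂ν) =ᵐ[Measure.pi fun _ => ν] G := by
  have hprod : ∀ᵐ p ∂(Measure.pi fun _ => ν).prod ν, F (update p.1 a p.2) = G p.1 := by
    filter_upwards [(measurePreserving_update a).quasiMeasurePreserving.ae hFG] with p hp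
    rw [hp, hG]
  filter_upwards [Measure.ae_ae_of_ae_prod hprod] with y hy
  rw [integral_congr_ae hy, integral_const, probReal_univ, one_smul]

theorem exists_ae_eq_const_of_dependsOn_of_swap {F G : (ι → 𝕐) → E} {s : Finset ι} {b : ι}
    (hb : b ∉ s) (hG : DependsOn G s) (hGF : G =ᵐ[Measure.pi fun _ => ν] F)
    (hswap : ∀ a ∈ s, (fun y => F (y ∘ Equiv.swap a b)) =ᵐ[Measure.pi fun _ => ν] F) :
    ∃ c, F =ᵐ[Measure.pi fun _ => ν] fun _ => c := by
  induction s using Finset.induction_on generalizing G with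
  | empty =>
    have := nonempty_of_isProbabilityMeasure (Measure.pi fun _ : ι => ν)
    rw [Finset.coe_empty] at hG
    exact ⟨G (Classical.arbitrary _), hGF.symm.trans (.of_forall fun y => hG.empty y _)⟩
  | insert a s ha ih =>
    have hGswap : (fun y => G (y ∘ Equiv.swap a b)) =ᵐ[Measure.pi fun _ => ν] G :=
      ((measurePreserving_comp_perm _).quasiMeasurePreserving.ae_eq_comp hGF).trans
        ((hswap a (Finset.mem_insert_self a s)).trans hGF.symm)
    have hGswap_update : ∀ y t, G (update y a t ∘ Equiv.swap a b) = G (y ∘ Equiv.swap a b) :=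
      fun y t => hG fun i hi => by
        have hib : i ≠ b := fun h => hb (h ▸ hi)
        simp [Equiv.swap_apply_eq_iff, hib]
    refine ih (fun h => hb (Finset.mem_insert_of_mem h)) (G := fun y => ∫ t, G (update y a t) ∂ν)
      ?_ ((integral_update_ae_eq a hGswap.symm hGswap_update).trans (hGswap.trans hGF))
      fun a' ha' => hswap a' (Finset.mem_insert_of_mem ha')
    simpa [ha] using dependsOn_integral_update hG a

end ProductMeasure

theorem const_of_condexp_randomPermutation_general
    {Ω 𝕐 : Type*} [F : MeasurableSpace Ω] [MeasurableSpace 𝕐]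
    (P : Measure Ω)
    (n m : ℕ) (hm : 1 ≤ m)
    (ν : Measure 𝕐) [IsProbabilityMeasure ν]
    (Y : Ω → Fin (n + m) → 𝕐) (hY : Measurable Y)
    (hac₁ : Measure.map Y P ≪ Measure.pi fun _ : Fin (n + m) => ν)
    (hac₂ : (Measure.pi fun _ : Fin (n + m) => ν) ≪ Measure.map Y P)
    (ς : Ω → Equiv.Perm (Fin (n + m)))
    (hindep : Indep (MeasurableSpace.comap ς ⊤) (MeasurableSpace.comap Y inferInstance) P)
    (hid : 0 < P {ω | ς ω = Equiv.refl (Fin (n + m))})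
    (hswap : ∀ i j : Fin (n + m), i ≠ j → 0 < P {ω | ς ω = Equiv.swap i j})
    (f : (Fin n → 𝕐) → ℝ) (hf : Measurable f)
    (hfix : (fun ω => f fun i => Y ω (Fin.castAdd m i)) =ᵐ[P]
      P[(fun ω => f fun i => Y ω (Fin.castAdd m i)) |
        MeasurableSpace.comap (fun ω (i : Fin (n + m)) => Y ω (ς ω i)) inferInstance]) :
    ∃ c : ℝ, (fun ω => f fun i => Y ω (Fin.castAdd m i)) =ᵐ[P] fun _ => c := by
  set μ := Measure.pi fun _ : Fin (n + m) => ν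
  set Fn : (Fin (n + m) → 𝕐) → ℝ := fun y => f fun i => y (Fin.castAdd m i)
  have hFn : Measurable Fn := hf.comp (measurable_pi_lambda _ fun i => measurable_pi_apply _)
  set Z : Ω → Fin (n + m) → 𝕐 := fun ω i => Y ω (ς ω i)
  obtain ⟨h, hh, hcond⟩ :
      ∃ h, Measurable h ∧ P[fun ω => Fn (Y ω) | .comap Z inferInstance] = h ∘ Z :=
    stronglyMeasurable_condExp.measurable.exists_eq_measurable_comp
  rw [hcond] at hfix
  have hFh : ∀ π, 0 < P {ω | ς ω = π} → Fn =ᵐ[μ] fun y => h (y ∘ π) := fun π hπ =>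
    hac₂.ae_le <| hindep.ae_map_of_ae (p := fun π y => Fn y = h (y ∘ π)) hY hπ
      (measurableSet_eq_fun hFn (hh.comp (measurable_pi_lambda _ fun _ => measurable_pi_apply _)))
      hfix
  have hFh_id : Fn =ᵐ[μ] h := hFh _ hid
  set b : Fin (n + m) := ⟨n, by omega⟩
  obtain ⟨c, hc⟩ := exists_ae_eq_const_of_dependsOn_of_swap (F := Fn) (G := Fn)
    (s := {i | (i : ℕ) < n}) (b := b) (by simp [b])
    (fun x y hxy => congrArg f (funext fun i => hxy _ (by simp))) .rfl fun a ha => by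
      have hab : a ≠ b := Fin.ne_of_val_ne (Finset.mem_filter.mp ha).2.ne
      exact ((measurePreserving_comp_perm _).quasiMeasurePreserving.ae_eq_comp hFh_id).trans
        (hFh _ (hswap a b hab)).symm
  exact ⟨c, ae_of_ae_map hY.aemeasurable (hac₁.ae_le hc)⟩

/-- Random-permutation lemma: let `Y : Ω → 𝕐^(n+m)` have a law mutually absolutely
continuous with `ν^(n+m)`, and let `ς` be an independent random permutation whose law
charges the identity and every transposition.  If an integrable function `f` of the
first `n` coordinates of `Y` equals a.s. its conditional expectation given the
permuted vector `Z ω = Y ω ∘ ς ω`, then it is a.s. constant. -/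
theorem const_of_condexp_randomPermutation
    {Ω 𝕐 : Type*} [F : MeasurableSpace Ω] [MeasurableSpace 𝕐] [StandardBorelSpace 𝕐]
    (P : Measure Ω) [IsProbabilityMeasure P]
    (n m : ℕ) (hn : 1 ≤ n) (hm : 1 ≤ m)
    (ν : Measure 𝕐) [IsProbabilityMeasure ν]
    (Y : Ω → Fin (n + m) → 𝕐) (hY : Measurable Y)
    (hac₁ : Measure.map Y P ≪ Measure.pi fun _ : Fin (n + m) => ν)
    (hac₂ : (Measure.pi fun _ : Fin (n + m) => ν) ≪ Measure.map Y P)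
    (ς : Ω → Equiv.Perm (Fin (n + m)))
    (hindep : Indep (MeasurableSpace.comap ς ⊤) (MeasurableSpace.comap Y inferInstance) P)
    (hid : 0 < P {ω | ς ω = Equiv.refl (Fin (n + m))})
    (hswap : ∀ i j : Fin (n + m), i ≠ j → 0 < P {ω | ς ω = Equiv.swap i j})
    (f : (Fin n → 𝕐) → ℝ) (hf : Measurable f)
    (hint : Integrable (fun ω => f fun i => Y ω (Fin.castAdd m i)) P)
    (hfix : (fun ω => f fun i => Y ω (Fin.castAdd m i)) =ᵐ[P]
      P[(fun ω => f fun i => Y ω (Fin.castAdd m i)) |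
        MeasurableSpace.comap (fun ω (i : Fin (n + m)) => Y ω (ς ω i)) inferInstance]) :
    ∃ c : ℝ, (fun ω => f fun i => Y ω (Fin.castAdd m i)) =ᵐ[P] fun _ => c :=
  const_of_condexp_randomPermutation_general (F := F) P n m hm ν Y hY hac₁ hac₂ ς hindep hid hswap f
    hf hfix
end

section
/- Let ν be a probability measure on a measurable space 𝕐 and let f : 𝕐 × 𝕐 → ℝ be measurable and integrable with respect to ν ⊗ ν. If f(y₁, y₂) = f(y₃, y₂) for (ν ⊗ ν ⊗ ν)-almost every (y₁, y₂, y₃), then there exists a measurable function h : 𝕐 → ℝ such that f(y₁, y₂) = h(y₂) for (ν ⊗ ν)-almost every (y₁, y₂). -/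
open MeasureTheory

/-- If `f (y₁, y₂) = f (y₃, y₂)` for `ν ⊗ ν ⊗ ν`-a.e. `(y₁, y₂, y₃)`, then `f`
collapses a.e. to a measurable function of the second variable only. -/
theorem exists_ae_eq_snd_of_ae_eq_first_swap
    {𝕐 : Type*} [MeasurableSpace 𝕐] (ν : Measure 𝕐) [IsProbabilityMeasure ν]
    (f : 𝕐 × 𝕐 → ℝ) (hf : Measurable f) (hint : Integrable f (ν.prod ν))
    (h : ∀ᵐ p ∂(ν.prod (ν.prod ν)), f (p.1, p.2.1) = f (p.2.2, p.2.1)) :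
    ∃ h' : 𝕐 → ℝ, Measurable h' ∧ ∀ᵐ p ∂(ν.prod ν), f p = h' p.2 := by
  refine ⟨fun y => ∫ x, f (x, y) ∂ν, ?_, ?_⟩
  · exact (hf.stronglyMeasurable.integral_prod_left').measurable
  · have hmap : Measure.map (MeasurableEquiv.prodAssoc : (𝕐 × 𝕐) × 𝕐 ≃ᵐ 𝕐 × 𝕐 × 𝕐)
        ((ν.prod ν).prod ν) = ν.prod (ν.prod ν) := Measure.prodAssoc_prod
    have hm : MeasurableSet {p : 𝕐 × 𝕐 × 𝕐 | f (p.1, p.2.1) = f (p.2.2, p.2.1)} :=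
      measurableSet_eq_fun
        (hf.comp (measurable_fst.prodMk measurable_snd.fst))
        (hf.comp (measurable_snd.snd.prodMk measurable_snd.fst))
    rw [← hmap] at h
    have h3 : ∀ᵐ q ∂((ν.prod ν).prod ν),
        f (q.1.1, q.1.2) = f (q.2, q.1.2) :=
      (ae_map_iff MeasurableEquiv.prodAssoc.measurable.aemeasurable hm).mp h
    have h2 := Measure.ae_ae_of_ae_prod h3
    filter_upwards [h2] with p hp
    have hp' : ∀ᵐ y₃ ∂ν, f p = f (y₃, p.2) := by simpa using hp
    calc f p = ∫ _ : 𝕐, f p ∂ν := by simp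
      _ = ∫ x, f (x, p.2) ∂ν := integral_congr_ae hp'
end

section
/- Let ν be a probability measure on a measurable space 𝕐 and let f : 𝕐 × 𝕐 → ℝ be measurable and integrable with respect to ν ⊗ ν. If for (ν ⊗ ν ⊗ ν)-almost every (y₁, y₂, y₃) one has both f(y₁, y₂) = f(y₃, y₂) and f(y₁, y₂) = f(y₁, y₃), then there exists a constant c ∈ ℝ such that f(y₁, y₂) = c for (ν ⊗ ν)-almost every (y₁, y₂). -/
open MeasureTheory

/-- If `f (y₁, y₂) = f (y₃, y₂)` and `f (y₁, y₂) = f (y₁, y₃)` for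
`ν ⊗ ν ⊗ ν`-a.e. `(y₁, y₂, y₃)`, then `f` is `ν ⊗ ν`-a.e. constant. -/
theorem exists_ae_const_of_ae_eq_both_swaps
    {𝕐 : Type*} [MeasurableSpace 𝕐] (ν : Measure 𝕐) [IsProbabilityMeasure ν]
    (f : 𝕐 × 𝕐 → ℝ) (hf : Measurable f) (hint : Integrable f (ν.prod ν))
    (h : ∀ᵐ p ∂(ν.prod (ν.prod ν)),
      f (p.1, p.2.1) = f (p.2.2, p.2.1) ∧ f (p.1, p.2.1) = f (p.1, p.2.2)) :
    ∃ c : ℝ, ∀ᵐ p ∂(ν.prod ν), f p = c := by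
  have h1 : ∀ᵐ y₁ ∂ν, ∀ᵐ y₂ ∂ν, ∀ᵐ y₃ ∂ν,
      f (y₁, y₂) = f (y₃, y₂) ∧ f (y₁, y₂) = f (y₁, y₃) := by
    filter_upwards [Measure.ae_ae_of_ae_prod h] with y₁ h'
    exact Measure.ae_ae_of_ae_prod h'
  have key : ∀ᵐ y₁ ∂ν, ∀ᵐ y₂ ∂ν, ∀ᵐ y₄ ∂ν, ∀ᵐ y₃ ∂ν,
      f (y₃, y₄) = f (y₁, y₂) := by
    filter_upwards [h1] with y₁ hy₁
    have A : ∀ᵐ y₂ ∂ν, ∀ᵐ y₄ ∂ν, f (y₁, y₂) = f (y₁, y₄) :=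
      hy₁.mono fun y₂ h' => h'.mono fun y₄ hh => hh.2
    have B : ∀ᵐ y₄ ∂ν, ∀ᵐ y₃ ∂ν, f (y₁, y₄) = f (y₃, y₄) :=
      hy₁.mono fun y₄ h' => h'.mono fun y₃ hh => hh.1
    filter_upwards [A] with y₂ hA
    filter_upwards [hA, B] with y₄ h4 hB4
    filter_upwards [hB4] with y₃ h3
    rw [← h3, ← h4]
  have hne : (ae ν).NeBot := by
    refine ae_neBot.mpr ?_
    exact IsProbabilityMeasure.ne_zero ν
  obtain ⟨y₁, hy⟩ := key.exists
  obtain ⟨y₂, hy₂⟩ := hy.exists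
  refine ⟨f (y₁, y₂), ?_⟩
  -- hy₂ : ∀ᵐ y₄, ∀ᵐ y₃, f (y₃, y₄) = f (y₁, y₂)
  have hmeas : MeasurableSet {q : 𝕐 × 𝕐 | f (q.2, q.1) = f (y₁, y₂)} :=
    measurableSet_eq_fun (hf.comp measurable_swap) measurable_const
  have hswap : ∀ᵐ y₃ ∂ν, ∀ᵐ y₄ ∂ν, f (y₃, y₄) = f (y₁, y₂) :=
    (Measure.ae_ae_comm (p := fun y₄ y₃ => f (y₃, y₄) = f (y₁, y₂)) hmeas).mp hy₂
  exact (Measure.ae_prod_iff_ae_ae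
    (measurableSet_eq_fun hf measurable_const)).mpr hswap
end

section
/- Let p, p′ ∈ (0, 1) and λ, λ′ ∈ (0, ∞). If the following three equalities hold: (1 − p)·e^{−λ} = (1 − p′)·e^{−λ′}; (1 − p)·λ·e^{−λ} + p·e^{−λ} = (1 − p′)·λ′·e^{−λ′} + p′·e^{−λ′}; and (1 − p)·(λ²/2)·e^{−λ} + p·λ·e^{−λ} = (1 − p′)·(λ′²/2)·e^{−λ′} + p′·λ′·e^{−λ′}; then p = p′ and λ = λ′. -/
/-- Identifiability of `(p, λ)` from the masses `w⁰, w¹, w²` of the law of the number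
of observations for a single target detected with probability `p` corrupted by
Poisson(`λ`) clutter. -/
theorem single_target_clutter_identifiable
    (p p' l l' : ℝ) (hp : p ∈ Set.Ioo (0 : ℝ) 1) (hp' : p' ∈ Set.Ioo (0 : ℝ) 1)
    (hl : 0 < l) (hl' : 0 < l')
    (h0 : (1 - p) * Real.exp (-l) = (1 - p') * Real.exp (-l'))
    (h1 : (1 - p) * l * Real.exp (-l) + p * Real.exp (-l)
        = (1 - p') * l' * Real.exp (-l') + p' * Real.exp (-l'))
    (h2 : (1 - p) * (l ^ 2 / 2) * Real.exp (-l) + p * l * Real.exp (-l)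
        = (1 - p') * (l' ^ 2 / 2) * Real.exp (-l') + p' * l' * Real.exp (-l')) :
    p = p' ∧ l = l' := by
  obtain ⟨hp0, hp1⟩ := hp
  obtain ⟨hp'0, hp'1⟩ := hp'
  have he : 0 < Real.exp (-l) := Real.exp_pos _
  have he' : 0 < Real.exp (-l') := Real.exp_pos _
  have hll : l = l' := by
    by_contra hne
    have hdne : l' - l ≠ 0 := fun h => hne (by linarith)
    have hB' : p' * Real.exp (-l')
        = p * Real.exp (-l) - (1 - p) * Real.exp (-l) * (l' - l) := by
      linear_combination (-1 : ℝ) * h1 + l' * h0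
    have key : (l' - l) * (p * Real.exp (-l)
        - (1 - p) * Real.exp (-l) * (l' - l) / 2) = 0 := by
      linear_combination (-1 : ℝ) * h2 + l' * h1 - (l' ^ 2 / 2) * h0
    have h2' : p * Real.exp (-l) = (1 - p) * Real.exp (-l) * (l' - l) / 2 := by
      rcases mul_eq_zero.mp key with h | h
      · exact absurd h hdne
      · linarith
    have hBpos : 0 < p * Real.exp (-l) := mul_pos hp0 he
    have hApos : 0 < (1 - p) * Real.exp (-l) := mul_pos (by linarith) he
    have hdpos : 0 < l' - l := by nlinarith
    have hneg : p' * Real.exp (-l') = -(p * Real.exp (-l)) := by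
      rw [hB', h2']; ring
    nlinarith [mul_pos hp'0 he']
  subst hll
  have hBB : p * Real.exp (-l) = p' * Real.exp (-l) := by
    linear_combination h1 - l * h0
  exact ⟨mul_right_cancel₀ (ne_of_gt he) hBB, rfl⟩
end
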